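/- Let H be a Hilbert space and let (f_i)_{i=1}^∞ be a sequence in H that can be partitioned into three families (g_i)_{i=1}^∞, (h_i)_{i∈Γ} (Γ finite or infinite), and (k_i)_{i=1}^n (n a natural number) such that: (g_i)_{i=1}^∞ is a Riesz basis for H; each k_i has infinite support with respect to (g_i); and there is a natural number m such that, setting G = span(g_1,…,g_m) and writing h_i = h_i¹ + h_i² with h_i² ∈ G and h_i¹ ∈ G^⊥, one has Σ_{i∈Γ} ‖h_i²‖² < ∞ and ((g_i)_{i=1}^∞, (h_i¹)_{i∈Γ}) is a Riesz frame for H. Then (f_i)_{i=1}^∞ is a frame for H with the subframe property. -/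

import Mathlib

open scoped ComplexInnerProductSpace
open Submodule Filter

noncomputable section

variable {H : Type*} [NormedAddCommGroup H] [InnerProductSpace ℂ H] [CompleteSpace H]

/-- The closed linear span of a set of vectors. -/
def closedSpan (s : Set H) : Submodule ℂ H := (Submodule.span ℂ s).topologicalClosure

/-- `f` is a frame for the closed subspace `K` with frame bounds `A`, `B`. -/
def IsFrameFor {ι : Type*} (f : ι → H) (K : Submodule ℂ H) (A B : ℝ) : Prop :=
  (∀ i, f i ∈ K) ∧ ∀ g ∈ K,
    Summable (fun i => ‖⟪g, f i⟫‖ ^ 2) ∧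
    A * ‖g‖ ^ 2 ≤ ∑' i, ‖⟪g, f i⟫‖ ^ 2 ∧
    ∑' i, ‖⟪g, f i⟫‖ ^ 2 ≤ B * ‖g‖ ^ 2

/-- `f` is a frame for the closed linear span of its terms, with bounds `A`, `B`. -/
def IsFrameSequence {ι : Type*} (f : ι → H) (A B : ℝ) : Prop :=
  IsFrameFor f (closedSpan (Set.range f)) A B

/-- Riesz frame with given uniform (Riesz frame) bounds. -/
def IsRieszFrameWith {ι : Type*} (f : ι → H) (A B : ℝ) : Prop :=
  closedSpan (Set.range f) = ⊤ ∧
  ∀ Δ : Set ι, IsFrameSequence (fun i : Δ => f i) A B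

def IsRieszFrame {ι : Type*} (f : ι → H) : Prop :=
  ∃ A B : ℝ, 0 < A ∧ 0 < B ∧ IsRieszFrameWith f A B

def HasSubframeProperty {ι : Type*} (f : ι → H) : Prop :=
  ∀ Δ : Set ι, ∃ A B : ℝ, 0 < A ∧ 0 < B ∧ IsFrameSequence (fun i : Δ => f i) A B

/-- Riesz basis for the whole space. -/
def IsRieszBasis {ι : Type*} (g : ι → H) : Prop :=
  closedSpan (Set.range g) = ⊤ ∧ ∃ c C : ℝ, 0 < c ∧ 0 < C ∧
    ∀ a : ι →₀ ℂ,
      c * Real.sqrt (∑ i ∈ a.support, ‖a i‖ ^ 2) ≤ ‖∑ i ∈ a.support, a i • g i‖ ∧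
      ‖∑ i ∈ a.support, a i • g i‖ ≤ C * Real.sqrt (∑ i ∈ a.support, ‖a i‖ ^ 2)

/-- The orthogonal projection of `H` onto the closed linear span of `s`, as a map `H → H`. -/
def projSpan (s : Set H) : H →L[ℂ] H :=
  haveI : CompleteSpace (closedSpan s : Submodule ℂ H) :=
    (Submodule.isClosed_topologicalClosure _).completeSpace_coe
  (closedSpan s).subtypeL.comp (orthogonalProjection (closedSpan s))

open Set Function
open scoped lp

/-!
Place the Riesz frame `((g n), (h¹ i))` at the indices of `f` and pad it with zeros on `Λ`. This
comparison family differs from `f` by the vectors `h² i` and `k i`, which are square-summable and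
all lie in the finite-dimensional space `W = span (g 0, …, g (m - 1)) + span (k i)`. On any
subfamily, the analysis operators of `f` and of the comparison family therefore agree on `Wᗮ`, a
closed subspace of finite codimension. The analysis operator of the comparison family has closed
range (uniform lower Riesz frame bound), closed range survives agreement on a closed subspace of
finite codimension, and a Bessel family whose analysis operator has closed range is a frame
sequence.
-/

section ClosedSpan

variable {E : Type*} [NormedAddCommGroup E] [InnerProductSpace ℂ E]

lemma mem_closedSpan {s : Set E} {x : E} (hx : x ∈ s) : x ∈ closedSpan s :=
  le_topologicalClosure _ (subset_span hx)

lemma finiteDimensional_closedSpan {s : Set E} (hs : s.Finite) :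
    FiniteDimensional ℂ (closedSpan s) := by
  have := FiniteDimensional.span_of_finite ℂ hs
  rw [closedSpan, (span ℂ s).closed_of_finiteDimensional.submodule_topologicalClosure_eq]
  infer_instance

end ClosedSpan

instance closedSpan.completeSpace (s : Set H) : CompleteSpace (closedSpan s) :=
  (isClosed_topologicalClosure _).completeSpace_coe

lemma projSpan_mem (s : Set H) (x : H) : projSpan s x ∈ closedSpan s :=
  (closedSpan s).starProjection_apply_mem x

section ClosedRange

variable {𝕜 E F : Type*} [NontriviallyNormedField 𝕜]
  [NormedAddCommGroup E] [NormedSpace 𝕜 E] [CompleteSpace E]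
  [NormedAddCommGroup F] [NormedSpace 𝕜 F] [CompleteSpace F]

namespace ContinuousLinearMap

theorem isClosed_image_of_ker_le (T : E →L[𝕜] F) (hT : IsClosed (range T))
    {S : Submodule 𝕜 E} (hS : IsClosed (S : Set E)) (hker : T.ker ≤ S) :
    IsClosed (T '' S) := by
  have hR : ((T : E →ₗ[𝕜] F).range : Set F) = range T := LinearMap.coe_range _
  have : CompleteSpace T.range := (hR ▸ hT).completeSpace_coe
  have hq := T.rangeRestrict.isQuotientMap (LinearMap.surjective_rangeRestrict _)
  have hsat : T.rangeRestrict ⁻¹' (T.rangeRestrict '' S) = S := by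
    refine subset_antisymm ?_ (subset_preimage_image _ _)
    rintro x ⟨y, hy, hyx⟩
    have hxy : x - y ∈ T.ker := by
      rw [LinearMap.mem_ker, map_sub, sub_eq_zero]
      exact congrArg Subtype.val hyx.symm
    simpa using S.add_mem (hker hxy) hy
  -- `T` is a quotient map onto its closed range, and `S` is saturated since it contains `ker T`.
  have hclosed : IsClosed (T.rangeRestrict '' S) :=
    hq.isCoinducing.isClosed_preimage.mp (hsat.symm ▸ hS)
  have himage : T '' S = Subtype.val '' (T.rangeRestrict '' S) := by
    rw [image_image]; rfl
  rw [himage]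
  exact (hR ▸ hT).isClosedMap_subtype_val _ hclosed

theorem isClosed_range_of_eqOn_of_cofg [CompleteSpace 𝕜] (T V : E →L[𝕜] F)
    (hT : IsClosed (range T)) {s : Submodule 𝕜 E} [s.CoFG] (hs : IsClosed (s : Set E))
    (hVT : EqOn V T s) : IsClosed (range V) := by
  have hsk : IsClosed ((s ⊔ T.ker : Submodule 𝕜 E) : Set E) :=
    Submodule.isClosed_mono_of_finiteDimensional_quotient hs le_sup_left
  have hmap : T '' (s ⊔ T.ker : Submodule 𝕜 E) = (s.map (V : E →ₗ[𝕜] F) : Set F) := by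
    rw [Submodule.map_coe, coe_coe, hVT.image_eq]
    refine (image_mono (SetLike.coe_mono le_sup_left)).antisymm' ?_
    rintro _ ⟨x, hx, rfl⟩
    obtain ⟨a, ha, k, hk, rfl⟩ := Submodule.mem_sup.mp hx
    exact ⟨a, ha, by simp [show T k = 0 from hk]⟩
  have hR : ((V : E →ₗ[𝕜] F).range : Set F) = range V := LinearMap.coe_range _
  rw [← hR]
  exact LinearMap.isClosed_range_of_isClosed_map_of_finiteDimensional_quotient
    (hmap ▸ T.isClosed_image_of_ker_le hT hsk le_sup_right)

end ContinuousLinearMap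

end ClosedRange

section BoundedBelow

variable {𝕜 E F : Type*} [RCLike 𝕜]
  [NormedAddCommGroup E] [InnerProductSpace 𝕜 E] [CompleteSpace E]
  [NormedAddCommGroup F] [NormedSpace 𝕜 F] [CompleteSpace F]

namespace ContinuousLinearMap

theorem isClosed_range_iff_exists_mul_norm_sq_le (T : E →L[𝕜] F) :
    IsClosed (range T) ↔ ∃ c > 0, ∀ x ∈ T.kerᗮ, c * ‖x‖ ^ 2 ≤ ‖T x‖ ^ 2 := by
  constructor
  · intro hT
    have hR : ((T : E →ₗ[𝕜] F).range : Set F) = range T := LinearMap.coe_range _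
    have : CompleteSpace T.range := (hR ▸ hT).completeSpace_coe
    obtain ⟨C, hC, hpre⟩ :=
      T.rangeRestrict.exists_preimage_norm_le (LinearMap.surjective_rangeRestrict _)
    refine ⟨(C ^ 2)⁻¹, by positivity, fun x hx => ?_⟩
    obtain ⟨y, hyx, hy⟩ := hpre (T.rangeRestrict x)
    have hxy : x - y ∈ T.ker := by
      rw [LinearMap.mem_ker, map_sub, sub_eq_zero]
      exact congrArg Subtype.val hyx.symm
    rw [inv_mul_le_iff₀ (by positivity)]
    -- `x ⊥ x - y ∈ ker T`, so `x` is the shortest preimage of `T x`.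
    calc ‖x‖ ^ 2 ≤ ‖y‖ ^ 2 := by
          rw [show y = x - (x - y) by abel, @norm_sub_sq 𝕜,
            Submodule.inner_left_of_mem_orthogonal hxy hx]
          simp only [map_zero, mul_zero, sub_zero, le_add_iff_nonneg_right]
          positivity
      _ ≤ (C * ‖T x‖) ^ 2 := pow_le_pow_left₀ (norm_nonneg _) hy 2
      _ = C ^ 2 * ‖T x‖ ^ 2 := mul_pow _ _ _
  · rintro ⟨c, hc, hbound⟩
    have hanti : AntilipschitzWith (Real.toNNReal (√c)⁻¹) (T.comp T.kerᗮ.subtypeL) := by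
      refine (T.comp T.kerᗮ.subtypeL).antilipschitz_of_bound fun x => ?_
      rw [Real.coe_toNNReal _ (by positivity)]
      refine (pow_le_pow_iff_left₀ (norm_nonneg _) (by positivity) two_ne_zero).mp ?_
      rw [mul_pow, inv_pow, Real.sq_sqrt hc.le, ← div_eq_inv_mul, le_div_iff₀ hc, mul_comm]
      exact hbound x x.2
    have hrange : range (T.comp T.kerᗮ.subtypeL) = range T := by
      refine (range_comp_subset_range (Subtype.val : T.kerᗮ → E) T).antisymm ?_
      rintro _ ⟨z, rfl⟩
      refine ⟨⟨z - T.ker.starProjection z, Submodule.sub_starProjection_mem_orthogonal z⟩, ?_⟩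
      simp [show T (T.ker.starProjection z) = 0 from T.ker.starProjection_apply_mem z]
    exact hrange ▸ hanti.isClosed_range (T.comp _).uniformContinuous

end ContinuousLinearMap

end BoundedBelow

section Bessel

variable {E ι : Type*} [NormedAddCommGroup E] [InnerProductSpace ℂ E]

def IsBesselSequence (F : ι → E) (B : ℝ) : Prop :=
  ∀ g : E, Summable (fun i => ‖⟪g, F i⟫‖ ^ 2) ∧ ∑' i, ‖⟪g, F i⟫‖ ^ 2 ≤ B * ‖g‖ ^ 2

lemma lp.norm_sq_eq_tsum {G : ι → Type*} [∀ i, NormedAddCommGroup (G i)] (x : lp G 2) :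
    ‖x‖ ^ 2 = ∑' i, ‖x i‖ ^ 2 := by
  simpa [Real.rpow_two] using lp.norm_rpow_eq_tsum (p := 2) (by norm_num) x

lemma isBesselSequence_of_summable_norm_sq {F : ι → E} (hF : Summable fun i => ‖F i‖ ^ 2) :
    IsBesselSequence F (∑' i, ‖F i‖ ^ 2) := by
  intro g
  have hle : ∀ i, ‖⟪g, F i⟫‖ ^ 2 ≤ ‖F i‖ ^ 2 * ‖g‖ ^ 2 := fun i => by
    rw [← mul_pow, mul_comm]
    exact pow_le_pow_left₀ (norm_nonneg _) (norm_inner_le_norm _ _) 2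
  have hsum := hF.mul_right (‖g‖ ^ 2)
  refine ⟨.of_nonneg_of_le (fun _ => by positivity) hle hsum, ?_⟩
  rw [← tsum_mul_right]
  exact Summable.tsum_le_tsum hle (.of_nonneg_of_le (fun _ => by positivity) hle hsum) hsum

lemma IsBesselSequence.add {F G : ι → E} {B C : ℝ} (hF : IsBesselSequence F B)
    (hG : IsBesselSequence G C) : IsBesselSequence (F + G) (2 * B + 2 * C) := by
  intro g
  obtain ⟨hsF, hbF⟩ := hF g
  obtain ⟨hsG, hbG⟩ := hG g
  have hle : ∀ i, ‖⟪g, (F + G) i⟫‖ ^ 2 ≤ 2 * ‖⟪g, F i⟫‖ ^ 2 + 2 * ‖⟪g, G i⟫‖ ^ 2 := fun i =>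
    calc ‖⟪g, (F + G) i⟫‖ ^ 2 ≤ (‖⟪g, F i⟫‖ + ‖⟪g, G i⟫‖) ^ 2 := by
          rw [Pi.add_apply, inner_add_right]
          exact pow_le_pow_left₀ (norm_nonneg _) (norm_add_le _ _) 2
      _ ≤ 2 * ‖⟪g, F i⟫‖ ^ 2 + 2 * ‖⟪g, G i⟫‖ ^ 2 := add_sq_le.trans_eq (by ring)
  have hsum := (hsF.mul_left 2).add (hsG.mul_left 2)
  have hs := Summable.of_nonneg_of_le (fun _ => by positivity) hle hsum
  refine ⟨hs, (Summable.tsum_le_tsum hle hs hsum).trans ?_⟩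
  rw [Summable.tsum_add (hsF.mul_left 2) (hsG.mul_left 2), tsum_mul_left, tsum_mul_left]
  linarith

def analysisOp (F : ι → E) {B : ℝ} (hF : IsBesselSequence F B) : E →L[ℂ] ℓ²(ι, ℂ) :=
  LinearMap.mkContinuousOfExistsBound
    { toFun g := ⟨fun i => ⟪F i, g⟫, memℓp_gen <| by
          simpa [Real.rpow_two, norm_inner_symm] using (hF g).1⟩
      map_add' x y := by ext i; exact inner_add_right _ _ _
      map_smul' c x := by ext i; exact inner_smul_right _ _ _ }
    ⟨√B, fun g => by
      rw [← Real.sqrt_sq (norm_nonneg _), ← Real.sqrt_sq (norm_nonneg g),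
        ← Real.sqrt_mul' _ (sq_nonneg _), lp.norm_sq_eq_tsum]
      refine Real.sqrt_le_sqrt ?_
      simpa [norm_inner_symm] using (hF g).2⟩

variable {F : ι → E} {B : ℝ} (hF : IsBesselSequence F B)

@[simp]
lemma analysisOp_apply (g : E) (i : ι) : analysisOp F hF g i = ⟪F i, g⟫ := rfl

lemma norm_analysisOp_sq (g : E) : ‖analysisOp F hF g‖ ^ 2 = ∑' i, ‖⟪g, F i⟫‖ ^ 2 := by
  simp [lp.norm_sq_eq_tsum, norm_inner_symm]

lemma ker_analysisOp : (analysisOp F hF).ker = (span ℂ (range F))ᗮ := by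
  ext g
  trans ∀ i, ⟪F i, g⟫ = 0
  · rw [LinearMap.mem_ker, ContinuousLinearMap.coe_coe, lp.ext_iff, funext_iff]
    simp
  · rw [← span_singleton_le_iff_mem, ← isOrtho_iff_le, isOrtho_comm, isOrtho_span]
    simp

end Bessel

section FrameSequence

variable {ι : Type*} {F : ι → H} {A B : ℝ}

lemma orthogonal_ker_analysisOp (hF : IsBesselSequence F B) :
    (analysisOp F hF).kerᗮ = closedSpan (range F) := by
  rw [ker_analysisOp, orthogonal_orthogonal_eq_closure]
  rfl

lemma IsFrameSequence.isBesselSequence (h : IsFrameSequence F A B) (hB : 0 ≤ B) :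
    IsBesselSequence F B := by
  intro g
  set P := (closedSpan (range F)).starProjection
  have hP : ∀ i, ⟪g, F i⟫ = ⟪P g, F i⟫ := fun i => by
    rw [← sub_eq_zero, ← inner_sub_left]
    exact inner_left_of_mem_orthogonal (h.1 i) (sub_starProjection_mem_orthogonal g)
  obtain ⟨hs, -, hb⟩ := h.2 (P g) (starProjection_apply_mem _ g)
  simp_rw [hP]
  refine ⟨hs, hb.trans ?_⟩
  gcongr
  exact norm_starProjection_apply_le _ g

lemma IsFrameSequence.isClosed_range_analysisOp (h : IsFrameSequence F A B) (hA : 0 < A)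
    {B' : ℝ} (hF : IsBesselSequence F B') : IsClosed (range (analysisOp F hF)) := by
  refine (analysisOp F hF).isClosed_range_iff_exists_mul_norm_sq_le.mpr ⟨A, hA, fun g hg => ?_⟩
  rw [orthogonal_ker_analysisOp] at hg
  rw [norm_analysisOp_sq]
  exact (h.2 g hg).2.1

lemma IsBesselSequence.exists_isFrameSequence (hF : IsBesselSequence F B)
    (hT : IsClosed (range (analysisOp F hF))) : ∃ A > 0, IsFrameSequence F A B := by
  obtain ⟨c, hc, hbound⟩ := (analysisOp F hF).isClosed_range_iff_exists_mul_norm_sq_le.mp hT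
  refine ⟨c, hc, fun i => mem_closedSpan ⟨i, rfl⟩, fun g hg => ⟨(hF g).1, ?_, (hF g).2⟩⟩
  rw [← orthogonal_ker_analysisOp hF] at hg
  simpa [norm_analysisOp_sq] using hbound g hg

theorem IsFrameSequence.exists_isFrameSequence_of_sub_mem {F' : ι → H}
    (hF' : IsFrameSequence F' A B) (hA : 0 < A) (hB : 0 < B) (W : Submodule ℂ H)
    [FiniteDimensional ℂ W] (hW : ∀ i, F i - F' i ∈ W)
    (hsum : Summable fun i => ‖F i - F' i‖ ^ 2) :
    ∃ A' B', 0 < A' ∧ 0 < B' ∧ IsFrameSequence F A' B' := by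
  have hBF' := hF'.isBesselSequence hB.le
  have hBF : IsBesselSequence F (2 * B + 2 * ∑' i, ‖F i - F' i‖ ^ 2) := by
    convert hBF'.add (isBesselSequence_of_summable_norm_sq hsum) using 1
    ext i
    simp
  have : Wᗮ.CoFG := (Module.Finite.iff_fg.mp inferInstance).cofg_of_isCompl W.isCompl_orthogonal
  have heq : EqOn (analysisOp F hBF) (analysisOp F' hBF') Wᗮ := fun g hg => by
    ext i
    rw [analysisOp_apply, analysisOp_apply, ← sub_eq_zero, ← inner_sub_left]
    exact inner_right_of_mem_orthogonal (hW i) hg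
  obtain ⟨A', hA', h⟩ := hBF.exists_isFrameSequence
    ((analysisOp F' hBF').isClosed_range_of_eqOn_of_cofg _
      (hF'.isClosed_range_analysisOp hA hBF') W.isClosed_orthogonal heq)
  exact ⟨A', _, hA', by positivity, h⟩

end FrameSequence

section Reindex

variable {E ι κ : Type*} [NormedAddCommGroup E] [InnerProductSpace ℂ E] {A B : ℝ}

lemma IsFrameSequence.of_comp {F : ι → E} {u : κ → ι} (hu : Injective u)
    (hF : ∀ i ∉ range u, F i = 0) (h : IsFrameSequence (F ∘ u) A B) : IsFrameSequence F A B := by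
  have hspan : closedSpan (range F) = closedSpan (range (F ∘ u)) := by
    refine congrArg topologicalClosure (le_antisymm ?_ (span_mono (range_comp_subset_range u F)))
    rw [span_le]
    rintro _ ⟨i, rfl⟩
    by_cases hi : i ∈ range u
    · obtain ⟨k, rfl⟩ := hi
      exact subset_span ⟨k, rfl⟩
    · rw [hF i hi]
      exact zero_mem _
  refine ⟨fun i => mem_closedSpan ⟨i, rfl⟩, fun g hg => ?_⟩
  obtain ⟨hs, hl, hb⟩ := h.2 g (hspan ▸ hg)
  have hzero : ∀ i ∉ range u, ‖⟪g, F i⟫‖ ^ 2 = 0 := fun i hi => by simp [hF i hi]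
  rw [← hu.tsum_eq fun i hi => by_contra fun h' => hi (hzero i h')]
  exact ⟨(hu.summable_iff hzero).mp hs, hl, hb⟩

lemma isFrameSequence_restrict_extend {F₀ : κ → E} {σ : κ → ι} (hσ : Injective σ)
    (hF₀ : ∀ Δ : Set κ, IsFrameSequence (fun k : Δ => F₀ k) A B) (Δ : Set ι) :
    IsFrameSequence (fun i : Δ => extend σ F₀ 0 i) A B := by
  refine IsFrameSequence.of_comp (u := fun k : σ ⁻¹' Δ => (⟨σ k, k.2⟩ : Δ)) ?_ ?_ ?_
  · intro k l hkl
    exact Subtype.ext (hσ (congrArg Subtype.val hkl))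
  · rintro ⟨i, hi⟩ hnot
    refine extend_apply' _ _ _ fun ⟨k, hk⟩ => hnot ⟨⟨k, ?_⟩, Subtype.ext hk⟩
    simpa [mem_preimage, hk] using hi
  · convert hF₀ (σ ⁻¹' Δ) using 2 with k
    exact hσ.extend_apply F₀ 0 k

lemma HasSubframeProperty.exists_isFrameFor_top {F : ι → E}
    (h : HasSubframeProperty F) (hspan : closedSpan (range F) = ⊤) :
    ∃ A B, 0 < A ∧ 0 < B ∧ IsFrameFor F ⊤ A B := by
  obtain ⟨A, B, hA, hB, h⟩ := h univ
  exact ⟨A, B, hA, hB, hspan ▸ h.of_comp Subtype.val_injective (by simp)⟩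

end Reindex

theorem IsRieszFrame.hasSubframeProperty_of_sub_mem {ι κ : Type*} {F₀ : κ → H}
    (hF₀ : IsRieszFrame F₀) {σ : κ → ι} (hσ : Injective σ) {F : ι → H} (W : Submodule ℂ H)
    [FiniteDimensional ℂ W] (hW : ∀ i, F i - extend σ F₀ 0 i ∈ W)
    (hsum : Summable fun i => ‖F i - extend σ F₀ 0 i‖ ^ 2) : HasSubframeProperty F := by
  obtain ⟨A, B, hA, hB, -, hsub⟩ := hF₀
  exact fun Δ => (isFrameSequence_restrict_extend hσ hsub Δ).exists_isFrameSequence_of_sub_mem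
    hA hB W (fun i => hW i) (hsum.subtype Δ)

section Partition

variable {M : Type*} [AddCommGroup M] (f : ℕ → M) {Δg : Set ℕ} (e : ℕ ≃ Δg) (Γ : Set ℕ) (P : M → M)

def comparisonFamily : ℕ → M :=
  extend (Sum.elim (fun n => (e n : ℕ)) (Subtype.val : Γ → ℕ))
    (Sum.elim (fun n => f (e n)) fun i : Γ => f i - P (f i)) 0

variable {Γ}

lemma injective_sumElim_val (hdisj : Disjoint Δg Γ) :
    Injective (Sum.elim (fun n => (e n : ℕ)) (Subtype.val : Γ → ℕ)) :=
  (Subtype.val_injective.comp e.injective).sumElim Subtype.val_injective fun n i h =>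
    disjoint_left.mp hdisj (e n).2 (by rw [show ((e n) : ℕ) = i from h]; exact i.2)

variable {f e P}

lemma sub_comparisonFamily_of_mem_left (hdisj : Disjoint Δg Γ) {i : ℕ} (hi : i ∈ Δg) :
    f i - comparisonFamily f e Γ P i = 0 := by
  obtain ⟨n, hn⟩ := e.surjective ⟨i, hi⟩
  have hni : Sum.elim (fun n => (e n : ℕ)) (Subtype.val : Γ → ℕ) (.inl n) = i := by simp [hn]
  rw [comparisonFamily, ← hni, (injective_sumElim_val e hdisj).extend_apply]
  simp

lemma sub_comparisonFamily_of_mem_right (hdisj : Disjoint Δg Γ) {i : ℕ} (hi : i ∈ Γ) :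
    f i - comparisonFamily f e Γ P i = P (f i) := by
  have := (injective_sumElim_val e hdisj).extend_apply
    (Sum.elim (fun n => f (e n)) fun i : Γ => f i - P (f i)) 0 (.inr ⟨i, hi⟩)
  simp only [Sum.elim_inr] at this
  rw [comparisonFamily, this, sub_sub_cancel]

lemma sub_comparisonFamily_of_notMem {i : ℕ} (hi : i ∉ Δg ∪ Γ) :
    f i - comparisonFamily f e Γ P i = f i := by
  rw [comparisonFamily, extend_apply' _ _ _ ?_, Pi.zero_apply, sub_zero]
  rintro ⟨k | k, rfl⟩
  · exact hi (.inl (e k).2)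
  · exact hi (.inr k.2)

lemma sub_comparisonFamily_mem {Λ : Set ℕ} (hpart : Δg ∪ Γ ∪ Λ = univ) (hdisj : Disjoint Δg Γ)
    {W : AddSubgroup M} (hP : ∀ i ∈ Γ, P (f i) ∈ W) (hΛ : ∀ i ∈ Λ, f i ∈ W) (i : ℕ) :
    f i - comparisonFamily f e Γ P i ∈ W := by
  by_cases hΔ : i ∈ Δg
  · rw [sub_comparisonFamily_of_mem_left hdisj hΔ]
    exact zero_mem _
  by_cases hΓ : i ∈ Γ
  · rw [sub_comparisonFamily_of_mem_right hdisj hΓ]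
    exact hP i hΓ
  rw [sub_comparisonFamily_of_notMem (by simp [hΔ, hΓ])]
  exact hΛ i (by simpa [hΔ, hΓ] using eq_univ_iff_forall.mp hpart i)

end Partition

lemma summable_norm_sub_comparisonFamily_sq {M : Type*} [SeminormedAddCommGroup M] {f : ℕ → M}
    {Δg Γ Λ : Set ℕ} {e : ℕ ≃ Δg} {P : M → M} (hpart : Δg ∪ Γ ∪ Λ = univ)
    (hdisj : Disjoint Δg Γ) (hΛ : Λ.Finite) (hP : Summable fun i : Γ => ‖P (f i)‖ ^ 2) :
    Summable fun i => ‖f i - comparisonFamily f e Γ P i‖ ^ 2 := by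
  refine ((summable_subtype_iff_indicator (f := fun i => ‖P (f i)‖ ^ 2)).mp hP).congr_cofinite ?_
  filter_upwards [hΛ.compl_mem_cofinite] with i hiΛ
  by_cases hΓ : i ∈ Γ
  · rw [indicator_of_mem hΓ, sub_comparisonFamily_of_mem_right hdisj hΓ]
  have hΔ : i ∈ Δg := by simpa [hΓ, show i ∉ Λ from hiΛ] using eq_univ_iff_forall.mp hpart i
  rw [indicator_of_notMem hΓ, sub_comparisonFamily_of_mem_left hdisj hΔ, norm_zero]
  simp

theorem frame_with_subframe_property_of_structure_general
    (f : ℕ → H) (Δg Γ Λ : Set ℕ)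
    (hpart : Δg ∪ Γ ∪ Λ = Set.univ) (hdgG : Disjoint Δg Γ)
    (hΛfin : Λ.Finite)
    (e : ℕ ≃ Δg)
    (hRB : IsRieszBasis (fun n => f (e n)))
    (m : ℕ)
    (hsum : Summable (fun i : Γ =>
      ‖projSpan ((fun n => f (e n)) '' Set.Iio m) (f i)‖ ^ 2))
    (hRF : IsRieszFrame (Sum.elim (fun n => f (e n))
      (fun i : Γ => f i - projSpan ((fun n => f (e n)) '' Set.Iio m) (f i)))) :
    (∃ A B : ℝ, 0 < A ∧ 0 < B ∧ IsFrameFor f (⊤ : Submodule ℂ H) A B) ∧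
    HasSubframeProperty f := by
  set G := (fun n => f (e n)) '' Set.Iio m
  set W := closedSpan G ⊔ span ℂ (f '' Λ)
  have := finiteDimensional_closedSpan ((finite_Iio m).image fun n => f (e n))
  have := FiniteDimensional.span_of_finite ℂ (hΛfin.image f)
  have hW := sub_comparisonFamily_mem (e := e) (P := projSpan G) hpart hdgG
    (W := W.toAddSubgroup) (fun i _ => mem_sup_left (projSpan_mem G (f i)))
    (fun i hi => mem_sup_right (subset_span ⟨i, hi, rfl⟩))
  have hsub := hRF.hasSubframeProperty_of_sub_mem (injective_sumElim_val e hdgG) W hW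
    (summable_norm_sub_comparisonFamily_sq hpart hdgG hΛfin hsum)
  refine ⟨hsub.exists_isFrameFor_top (top_unique ?_), hsub⟩
  rw [← hRB.1]
  exact topologicalClosure_mono (span_mono (range_comp_subset_range _ f))

/-- **Theorem 3.2, (2) ⇒ (1).** If a sequence `f` splits into three families — a Riesz basis
`(g n) = (f (e n))` (indexed by `Δg`), finitely many vectors (indexed by `Λ`) of infinite support
with respect to the Riesz basis (i.e. not lying in the algebraic span of the basis vectors), and
vectors `(h i)_{i ∈ Γ}` — and there is `m` such that, with `G` the span of the first `m` basis
vectors and `h i = h¹ i + h² i` the orthogonal decomposition with `h² i ∈ G`, `h¹ i ∈ Gᗮ`, one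
has `∑_{i ∈ Γ} ‖h² i‖² < ∞` and `((g n)_n, (h¹ i)_{i ∈ Γ})` is a Riesz frame for `H`, then `f`
is a frame for `H` with the subframe property. -/
theorem frame_with_subframe_property_of_structure
    (f : ℕ → H) (Δg Γ Λ : Set ℕ)
    (hpart : Δg ∪ Γ ∪ Λ = Set.univ) (hdgG : Disjoint Δg Γ) (hdgL : Disjoint Δg Λ)
    (hGL : Disjoint Γ Λ) (hΛfin : Λ.Finite)
    (e : ℕ ≃ Δg)
    (hRB : IsRieszBasis (fun n => f (e n)))
    (hΛ : ∀ i ∈ Λ, f i ∉ Submodule.span ℂ (Set.range fun n => f (e n)))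
    (m : ℕ)
    (hsum : Summable (fun i : Γ =>
      ‖projSpan ((fun n => f (e n)) '' Set.Iio m) (f i)‖ ^ 2))
    (hRF : IsRieszFrame (Sum.elim (fun n => f (e n))
      (fun i : Γ => f i - projSpan ((fun n => f (e n)) '' Set.Iio m) (f i)))) :
    (∃ A B : ℝ, 0 < A ∧ 0 < B ∧ IsFrameFor f (⊤ : Submodule ℂ H) A B) ∧
    HasSubframeProperty f :=
  frame_with_subframe_property_of_structure_general f Δg Γ Λ hpart hdgG hΛfin e hRB m hsum hRF
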